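/- Let n ≥ 1, T > 0, and let q : ℝⁿ → ℝ be bounded and continuous. Let v, F : ℝ × ℝⁿ → ℂ be continuously differentiable, with v(t,·) twice continuously differentiable in x for each t, and suppose there is a compact set K ⊂ ℝⁿ such that v(t,·) and F(t,·) vanish outside K for every t ∈ [0,T]. If i ∂ₜv + Δv + q v = F on [0,T] × ℝⁿ and v(0,·) = 0, then for every t ∈ [0,T], ‖v(t,·)‖_{L²} ≤ ∫₀ᵗ ‖F(s,·)‖_{L²} ds. -/

import Mathlib

open MeasureTheory Complex

noncomputable section

/-- Partial derivative in the `j`-th coordinate direction of a complex-valued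
function on `ℝⁿ`. -/
def pd {n : ℕ} (j : Fin n) (f : EuclideanSpace ℝ (Fin n) → ℂ)
    (x : EuclideanSpace ℝ (Fin n)) : ℂ :=
  fderiv ℝ f x (EuclideanSpace.single j 1)

/-- Euclidean Laplacian `Σⱼ ∂²/∂xⱼ²` of a complex-valued function on `ℝⁿ`. -/
def lapC {n : ℕ} (f : EuclideanSpace ℝ (Fin n) → ℂ)
    (x : EuclideanSpace ℝ (Fin n)) : ℂ :=
  ∑ j, pd j (pd j f) x

/-- `L²`-norm of a complex-valued function on `ℝⁿ`:
`‖f‖_{L²} = (∫ |f(x)|² dx)^{1/2}`. -/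
def L2norm {n : ℕ} (f : EuclideanSpace ℝ (Fin n) → ℂ) : ℝ :=
  (∫ x, ‖f x‖ ^ 2) ^ (1/2 : ℝ)

/-!
Energy method. For `E(t) = ‖v(t,·)‖²_{L²}` the equation gives `⟪v, ∂ₜv⟫ = Im(v̄ F) - Im(v̄ Δv)`
pointwise, and integrating by parts `∫ v̄ Δv = -Σⱼ ∫ |∂ⱼv|²` is real, so the Laplacian and the
real potential drop out and `E' ≤ 2 ‖F‖_{L²} √E` by Cauchy–Schwarz. Comparing `√(E + ε²)` with
`∫₀ᵗ ‖F‖_{L²}` and letting `ε → 0` gives the estimate.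
-/

open Set
open scoped ComplexConjugate InnerProductSpace Topology

section L2

variable {n : ℕ}

theorem L2norm_eq_sqrt (f : EuclideanSpace ℝ (Fin n) → ℂ) :
    L2norm f = √(∫ x, ‖f x‖ ^ 2) :=
  (Real.sqrt_eq_rpow _).symm

theorem integral_norm_mul_norm_le_L2norm_mul {f g : EuclideanSpace ℝ (Fin n) → ℂ}
    (hf : MemLp f 2) (hg : MemLp g 2) :
    ∫ x, ‖f x‖ * ‖g x‖ ≤ L2norm f * L2norm g := by
  have h := integral_mul_le_Lp_mul_Lq_of_nonneg Real.HolderConjugate.two_two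
    (.of_forall fun x => norm_nonneg (f x)) (.of_forall fun x => norm_nonneg (g x))
    (by simpa using hf.norm) (by simpa using hg.norm)
  simpa only [Real.rpow_two, L2norm] using h

end L2

theorem integrable_conj_mul {X : Type*} [TopologicalSpace X] [MeasurableSpace X]
    [OpensMeasurableSpace X] {μ : Measure X} [IsFiniteMeasureOnCompacts μ] {f g : X → ℂ}
    (hf : Continuous f) (hfc : HasCompactSupport f) (hg : Continuous g) :
    Integrable (fun x => conj (f x) * g x) μ :=
  ((continuous_conj.comp hf).mul hg).integrable_of_hasCompactSupport
    (hfc.comp_left (map_zero _)).mul_right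

section Green

variable {n : ℕ} {f : EuclideanSpace ℝ (Fin n) → ℂ}

theorem pd_conj (j : Fin n) (x : EuclideanSpace ℝ (Fin n)) :
    pd j (fun y => conj (f y)) x = conj (pd j f x) := by
  simp only [pd]
  exact congrArg (· (EuclideanSpace.single j 1)) (fderiv_star (𝕜 := ℝ) (f := f) (x := x))

theorem HasCompactSupport.pd (hf : HasCompactSupport f) (j : Fin n) :
    HasCompactSupport (pd j f) :=
  hf.fderiv_apply (𝕜 := ℝ) _

theorem contDiff_pd {m : ℕ} (hf : ContDiff ℝ (m + 1) f) (j : Fin n) : ContDiff ℝ m (pd j f) :=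
  (hf.fderiv_right le_rfl).clm_apply contDiff_const

theorem continuous_pd (hf : ContDiff ℝ 1 f) (j : Fin n) : Continuous (pd j f) :=
  (hf.continuous_fderiv one_ne_zero).clm_apply continuous_const

theorem integral_conj_mul_pd_pd (hf : ContDiff ℝ 2 f) (hfc : HasCompactSupport f) (j : Fin n) :
    ∫ x, conj (f x) * pd j (pd j f) x = -((∫ x, ‖pd j f x‖ ^ 2 : ℝ) : ℂ) := by
  have hf1 : ContDiff ℝ 1 (pd j f) := contDiff_pd (m := 1) hf j
  have hpd : Continuous (pd j f) := hf1.continuous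
  have hpd_conj : pd j (fun y => conj (f y)) = fun x => conj (pd j f x) := funext (pd_conj j)
  have key := integral_mul_fderiv_eq_neg_fderiv_mul_of_integrable (μ := volume)
    (f := fun x => conj (f x)) (g := pd j f) (v := EuclideanSpace.single j 1) ?_
    (integrable_conj_mul hf.continuous hfc (continuous_pd hf1 j))
    (integrable_conj_mul hf.continuous hfc hpd)
    (fun x _ => (hf.differentiable two_ne_zero).star x)
    (fun x _ => hf1.differentiable one_ne_zero x)
  · change ∫ x, conj (f x) * pd j (pd j f) x = -∫ x, pd j (fun y => conj (f y)) x * pd j f x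
      at key
    simp only [hpd_conj, Complex.conj_mul', ← Complex.ofReal_pow] at key
    rw [key, integral_complex_ofReal]
  · change Integrable fun x => pd j (fun y => conj (f y)) x * pd j f x
    rw [hpd_conj]
    exact integrable_conj_mul hpd (hfc.pd j) hpd

theorem integral_conj_mul_lapC (hf : ContDiff ℝ 2 f) (hfc : HasCompactSupport f) :
    ∫ x, conj (f x) * lapC f x = -∑ j, ((∫ x, ‖pd j f x‖ ^ 2 : ℝ) : ℂ) := by
  simp only [lapC, Finset.mul_sum]
  rw [integral_finsetSum _ fun j _ =>
    integrable_conj_mul hf.continuous hfc (continuous_pd (contDiff_pd (m := 1) hf j) j)]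
  simp only [integral_conj_mul_pd_pd hf hfc, Finset.sum_neg_distrib]

theorem im_integral_conj_mul_lapC (hf : ContDiff ℝ 2 f) (hfc : HasCompactSupport f) :
    (∫ x, conj (f x) * lapC f x).im = 0 := by
  simp [integral_conj_mul_lapC hf hfc, ← Complex.ofReal_sum]

end Green

theorem Complex.inner_eq_im_conj_mul_of_I_mul_add {a b c : ℂ} {r : ℝ}
    (h : I * b + r * a = c) : ⟪a, b⟫_ℝ = (conj a * c).im := by
  subst h
  simp only [Complex.inner, mul_re, mul_im, add_im, add_re, conj_re, conj_im, I_re, I_im,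
    ofReal_re, ofReal_im]
  ring

theorem integral_inner_le_L2norm_mul_L2norm_of_schrodinger {n : ℕ}
    {f g h : EuclideanSpace ℝ (Fin n) → ℂ} {q : EuclideanSpace ℝ (Fin n) → ℝ}
    (hf : ContDiff ℝ 2 f) (hfc : HasCompactSupport f) (hh : Continuous h)
    (hhc : HasCompactSupport h) (heq : ∀ x, I * g x + lapC f x + q x * f x = h x) :
    ∫ x, ⟪f x, g x⟫_ℝ ≤ L2norm f * L2norm h := by
  have hlap : Continuous (lapC f) :=
    continuous_finsetSum _ fun j _ => continuous_pd (contDiff_pd (m := 1) hf j) j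
  have hfh := integrable_conj_mul (μ := volume) hf.continuous hfc hh
  have hflap := integrable_conj_mul (μ := volume) hf.continuous hfc hlap
  have hpt (x) : ⟪f x, g x⟫_ℝ = (conj (f x) * (h x - lapC f x)).im :=
    Complex.inner_eq_im_conj_mul_of_I_mul_add (by rw [← heq x]; ring)
  calc ∫ x, ⟪f x, g x⟫_ℝ
      = (∫ x, conj (f x) * h x).im - (∫ x, conj (f x) * lapC f x).im := by
        simp only [hpt, mul_sub]
        rw [← Complex.sub_im, ← integral_sub hfh hflap]
        exact integral_im (hfh.sub hflap)
    _ = (∫ x, conj (f x) * h x).im := by rw [im_integral_conj_mul_lapC hf hfc, sub_zero]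
    _ ≤ ∫ x, ‖f x‖ * ‖h x‖ := by
        refine (Complex.im_le_norm _).trans ((norm_integral_le_integral_norm _).trans_eq ?_)
        simp only [norm_mul, Complex.norm_conj]
    _ ≤ L2norm f * L2norm h :=
        integral_norm_mul_norm_le_L2norm_mul (hf.continuous.memLp_of_hasCompactSupport hfc)
          (hh.memLp_of_hasCompactSupport hhc)

section Parametric

variable {X E : Type*} [TopologicalSpace X] [MeasurableSpace X] [OpensMeasurableSpace X]
  {μ : Measure X} [NormedAddCommGroup E] [NormedSpace ℝ E] {K : Set X}

theorem continuousOn_integral_of_eq_zero_outside [LocallyCompactSpace X]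
    [SecondCountableTopologyEither X E] [IsLocallyFiniteMeasure μ]
    {g : ℝ → X → E} (hg : Continuous g.uncurry) (hK : IsCompact K) {I : Set ℝ}
    (hgK : ∀ t ∈ I, ∀ x ∉ K, g t x = 0) : ContinuousOn (fun t => ∫ x, g t x ∂μ) I :=
  (continuous_parametric_integral_of_continuous hg hK).continuousOn.congr fun t ht =>
    (setIntegral_eq_integral_of_forall_compl_eq_zero (hgK t ht)).symm

theorem hasDerivAt_setIntegral_of_continuous_deriv [T2Space X]
    [SecondCountableTopologyEither X E] [IsFiniteMeasureOnCompacts μ] {g g' : ℝ → X → E}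
    (hK : IsCompact K)
    (hg : ∀ t, Continuous (g t)) (hg' : Continuous g'.uncurry)
    (hderiv : ∀ t x, HasDerivAt (g · x) (g' t x) t) (t₀ : ℝ) :
    HasDerivAt (fun t => ∫ x in K, g t x ∂μ) (∫ x in K, g' t₀ x ∂μ) t₀ := by
  obtain ⟨M, hM⟩ := ((isCompact_closedBall t₀ 1).prod hK).exists_bound_of_continuousOn
    hg'.continuousOn
  refine (hasDerivAt_integral_of_dominated_loc_of_deriv_le (bound := fun _ => M)
    (Metric.ball_mem_nhds t₀ one_pos) (.of_forall fun t => (hg t).aestronglyMeasurable)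
    ((hg t₀).continuousOn.integrableOn_compact hK)
    (hg'.comp (Continuous.prodMk_right t₀)).aestronglyMeasurable ?_
    (integrableOn_const hK.measure_ne_top) (.of_forall fun x t _ => hderiv t x)).2
  filter_upwards [ae_restrict_mem hK.measurableSet] with x hx t ht
  exact hM (t, x) ⟨Metric.ball_subset_closedBall ht, hx⟩

end Parametric

theorem hasDerivAt_integral_norm_sq {X F : Type*} [NormedAddCommGroup X] [NormedSpace ℝ X]
    [MeasurableSpace X] [OpensMeasurableSpace X] {μ : Measure X} [IsFiniteMeasureOnCompacts μ]
    [NormedAddCommGroup F] [InnerProductSpace ℝ F] {v : ℝ × X → F} (hv : ContDiff ℝ 1 v)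
    {K : Set X} (hK : IsCompact K) {I : Set ℝ} {t : ℝ} (hI : I ∈ 𝓝 t)
    (hvK : ∀ s ∈ I, ∀ x ∉ K, v (s, x) = 0) :
    HasDerivAt (fun s => ∫ x, ‖v (s, x)‖ ^ 2 ∂μ)
      (2 * ∫ x, ⟪v (t, x), deriv (fun s => v (s, x)) t⟫_ℝ ∂μ) t := by
  have hd (s : ℝ) (x : X) : HasDerivAt (fun s => v (s, x)) (fderiv ℝ v (s, x) (1, 0)) s :=
    (hv.differentiable one_ne_zero (s, x)).hasFDerivAt.comp_hasDerivAt s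
      ((hasDerivAt_id s).prodMk (hasDerivAt_const s x))
  have hdv : Continuous fun p : ℝ × X => fderiv ℝ v p (1, 0) :=
    (hv.continuous_fderiv one_ne_zero).clm_apply continuous_const
  have key := hasDerivAt_setIntegral_of_continuous_deriv (μ := μ) hK
    (g := fun s x => ‖v (s, x)‖ ^ 2) (g' := fun s x => 2 * ⟪v (s, x), fderiv ℝ v (s, x) (1, 0)⟫_ℝ)
    (fun s => (hv.continuous.comp (Continuous.prodMk_right s)).norm.pow 2)
    (continuous_const.mul (hv.continuous.inner hdv)) (fun s x => (hd s x).norm_sq) t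
  have hv_t : ∀ x ∉ K, v (t, x) = 0 := hvK t (mem_of_mem_nhds hI)
  rw [setIntegral_eq_integral_of_forall_compl_eq_zero fun x hx => by simp [hv_t x hx],
    integral_const_mul] at key
  simp only [(hd t _).deriv]
  refine key.congr_of_eventuallyEq ?_
  filter_upwards [hI] with s hs
  exact (setIntegral_eq_integral_of_forall_compl_eq_zero fun x hx => by simp [hvK s hs x hx]).symm

theorem sqrt_le_integral_of_hasDerivAt_le_two_mul_sqrt {E D f : ℝ → ℝ} {b : ℝ} (hb : 0 ≤ b)
    (hE : ContinuousOn E (Icc 0 b)) (hE0 : E 0 = 0) (hEnn : ∀ t ∈ Icc 0 b, 0 ≤ E t)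
    (hf : ContinuousOn f (Icc 0 b)) (hfnn : ∀ t ∈ Ioo 0 b, 0 ≤ f t)
    (hD : ∀ t ∈ Ioo 0 b, HasDerivAt E (D t) t)
    (hDle : ∀ t ∈ Ioo 0 b, D t ≤ 2 * f t * √(E t)) :
    √(E b) ≤ ∫ s in 0..b, f s := by
  refine le_of_forall_pos_le_add fun ε hε => ?_
  have hEε : ∀ t ∈ Icc 0 b, 0 < E t + ε ^ 2 := fun t ht => by
    have := hEnn t ht; positivity
  have hP : ContinuousOn (fun s => ∫ u in 0..s, f u) (Icc 0 b) := by
    rw [← uIcc_of_le hb] at hf ⊢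
    exact intervalIntegral.continuousOn_primitive_interval (hf.integrableOn_compact isCompact_uIcc)
  have hP' : ∀ s ∈ Ioo 0 b, HasDerivAt (fun s => ∫ u in 0..s, f u) (f s) s := fun s hs =>
    intervalIntegral.integral_hasDerivAt_right
      ((hf.mono (Icc_subset_Icc_right hs.2.le)).intervalIntegrable_of_Icc hs.1.le)
      ((hf.mono Ioo_subset_Icc_self).stronglyMeasurableAtFilter isOpen_Ioo s hs)
      (hf.continuousAt (Icc_mem_nhds hs.1 hs.2))
  -- the `ε` keeps the square root differentiable where `E` vanishes
  have hanti : AntitoneOn (fun s => √(E s + ε ^ 2) - ∫ u in 0..s, f u) (Icc 0 b) := by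
    refine antitoneOn_of_hasDerivWithinAt_nonpos (convex_Icc 0 b)
      (((hE.add continuousOn_const).sqrt).sub hP) (f' := fun s => D s / (2 * √(E s + ε ^ 2)) - f s)
      (fun s hs => ?_) (fun s hs => ?_) <;> rw [interior_Icc] at hs
    · have hsI : s ∈ Icc 0 b := Ioo_subset_Icc_self hs
      exact ((((hD s hs).add_const _).sqrt (hEε s hsI).ne').sub (hP' s hs)).hasDerivWithinAt
    · have hsI : s ∈ Icc 0 b := Ioo_subset_Icc_self hs
      have hsqrt : √(E s) ≤ √(E s + ε ^ 2) := Real.sqrt_le_sqrt (by nlinarith)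
      rw [sub_nonpos, div_le_iff₀ (mul_pos two_pos (Real.sqrt_pos.2 (hEε s hsI)))]
      nlinarith [hDle s hs, hfnn s hs, mul_le_mul_of_nonneg_left hsqrt (hfnn s hs)]
  have h := hanti ⟨le_rfl, hb⟩ ⟨hb, le_rfl⟩ hb
  simp only [hE0, zero_add, Real.sqrt_sq hε.le, intervalIntegral.integral_same, sub_zero] at h
  have : √(E b) ≤ √(E b + ε ^ 2) := Real.sqrt_le_sqrt (by nlinarith)
  linarith

theorem stmt1_general {n : ℕ} (T : ℝ)
    (q : EuclideanSpace ℝ (Fin n) → ℝ)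
    (v F : ℝ × EuclideanSpace ℝ (Fin n) → ℂ)
    (hv : ContDiff ℝ 1 v) (hF : ContDiff ℝ 1 F)
    (hvx : ∀ t : ℝ, ContDiff ℝ 2 (fun x => v (t, x)))
    (K : Set (EuclideanSpace ℝ (Fin n))) (hK : IsCompact K)
    (hsupp : ∀ t ∈ Set.Icc (0:ℝ) T, ∀ x ∉ K, v (t, x) = 0 ∧ F (t, x) = 0)
    (hpde : ∀ t ∈ Set.Icc (0:ℝ) T, ∀ x,
      Complex.I * deriv (fun s => v (s, x)) t + lapC (fun y => v (t, y)) x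
        + (q x : ℂ) * v (t, x) = F (t, x))
    (hv0 : ∀ x, v (0, x) = 0) :
    ∀ t ∈ Set.Icc (0:ℝ) T,
      L2norm (fun x => v (t, x)) ≤ ∫ s in (0:ℝ)..t, L2norm (fun x => F (s, x)) := by
  intro t ht
  have hsub : Icc 0 t ⊆ Icc 0 T := Icc_subset_Icc_right ht.2
  have hEv : ContinuousOn (fun s => ∫ x, ‖v (s, x)‖ ^ 2) (Icc 0 T) :=
    continuousOn_integral_of_eq_zero_outside (g := fun s x => ‖v (s, x)‖ ^ 2)
      (by have := hv.continuous; fun_prop) hK fun s hs x hx => by simp [(hsupp s hs x hx).1]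
  have hEF : ContinuousOn (fun s => ∫ x, ‖F (s, x)‖ ^ 2) (Icc 0 T) :=
    continuousOn_integral_of_eq_zero_outside (g := fun s x => ‖F (s, x)‖ ^ 2)
      (by have := hF.continuous; fun_prop) hK fun s hs x hx => by simp [(hsupp s hs x hx).2]
  rw [L2norm_eq_sqrt]
  refine sqrt_le_integral_of_hasDerivAt_le_two_mul_sqrt ht.1 (hEv.mono hsub) (by simp [hv0])
    (fun s _ => integral_nonneg fun x => by positivity)
    ((hEF.sqrt.mono hsub).congr fun s _ => L2norm_eq_sqrt _)
    (fun s _ => (L2norm_eq_sqrt _).trans_ge (Real.sqrt_nonneg _))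
    (fun s hs => hasDerivAt_integral_norm_sq hv hK (Icc_mem_nhds hs.1 (hs.2.trans_le ht.2))
      fun s hs x hx => (hsupp s hs x hx).1) (fun s hs => ?_)
  have hsT : s ∈ Icc 0 T := hsub (Ioo_subset_Icc_self hs)
  have h := integral_inner_le_L2norm_mul_L2norm_of_schrodinger (h := fun x => F (s, x))
    (hvx s) (.intro hK fun x hx => (hsupp s hsT x hx).1) (hF.continuous.comp (.prodMk_right s))
    (.intro hK fun x hx => (hsupp s hsT x hx).2) (hpde s hsT)
  rw [L2norm_eq_sqrt] at h
  linarith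

/-- If `i ∂ₜv + Δv + q v = F` on `[0,T] × ℝⁿ`, with `v, F` compactly supported in `x`
and `v(0,·) = 0`, then `‖v(t,·)‖_{L²} ≤ ∫₀ᵗ ‖F(s,·)‖_{L²} ds` for `t ∈ [0,T]`. -/
theorem stmt1 {n : ℕ} (hn : 1 ≤ n) (T : ℝ) (hT : 0 < T)
    (q : EuclideanSpace ℝ (Fin n) → ℝ)
    (hq_bdd : ∃ M : ℝ, ∀ x, |q x| ≤ M) (hq_cont : Continuous q)
    (v F : ℝ × EuclideanSpace ℝ (Fin n) → ℂ)
    (hv : ContDiff ℝ 1 v) (hF : ContDiff ℝ 1 F)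
    (hvx : ∀ t : ℝ, ContDiff ℝ 2 (fun x => v (t, x)))
    (K : Set (EuclideanSpace ℝ (Fin n))) (hK : IsCompact K)
    (hsupp : ∀ t ∈ Set.Icc (0:ℝ) T, ∀ x ∉ K, v (t, x) = 0 ∧ F (t, x) = 0)
    (hpde : ∀ t ∈ Set.Icc (0:ℝ) T, ∀ x,
      Complex.I * deriv (fun s => v (s, x)) t + lapC (fun y => v (t, y)) x
        + (q x : ℂ) * v (t, x) = F (t, x))
    (hv0 : ∀ x, v (0, x) = 0) :
    ∀ t ∈ Set.Icc (0:ℝ) T,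
      L2norm (fun x => v (t, x)) ≤ ∫ s in (0:ℝ)..t, L2norm (fun x => F (s, x)) :=
  stmt1_general T q v F hv hF hvx K hK hsupp hpde hv0
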